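/- arXiv:1003.3671 — 2 statements merged into one kernel-verified Lean document; each statement's English description precedes it below -/
import Mathlib

section
/- Let $X$ be countable and let $G:[0,1]^X\to[0,1]$ be given at a point $x$ by $G(z|x)=\sum_{f\in S_X}\mu_x(f)\prod_{y\in X} z(y)^{f(y)}$, where $\mu_x$ is a probability measure on the set $S_X$ of finitely supported functions $X\to\mathbb N$, and assume the means $m_{xy}:=\sum_f f(y)\mu_x(f)$ satisfy $\sum_y m_{xy}<\infty$. Suppose $z\in[0,1]^X$ satisfies $G(z|x)\le z(x)$ for all $x$, and set $v:=\mathbf 1 - z$. Then for every $x$, $\sum_{y\in X} m_{xy} v(y) \ge v(x)$. -/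
open scoped ENNReal

/-!
Truncated subtraction `a ↦ 1 - a` turns products into sums, `1 - a * b ≤ (1 - a) + (1 - b)`,
so `1 - ∏ z(y)^{f(y)} ≤ ∑ f(y) (1 - z(y))`: this is the tangent-line bound for the convex
generating function at `𝟙`. Averaging over `μ_x` gives `1 - G(z|x) ≤ ∑ m_{xy} (1 - z(y))`,
and `G(z|x) ≤ z(x)` finishes the proof.
-/

section

variable {R : Type*} [CommSemiring R] [LinearOrder R] [CanonicallyOrderedAdd R] [Sub R]
  [OrderedSub R]

theorem one_sub_mul_le_add (a b : R) : 1 - a * b ≤ (1 - a) + (1 - b) := by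
  rcases le_total 1 a with ha | ha
  · calc 1 - a * b ≤ 1 - b := tsub_le_tsub_left (le_mul_of_one_le_left zero_le ha) 1
      _ ≤ (1 - a) + (1 - b) := le_add_self
  rcases le_total 1 b with hb | hb
  · calc 1 - a * b ≤ 1 - a := tsub_le_tsub_left (le_mul_of_one_le_right zero_le hb) 1
      _ ≤ (1 - a) + (1 - b) := le_self_add
  rw [tsub_le_iff_right]
  calc (1 : R) = (1 - a) + a * ((1 - b) + b) := by
        rw [tsub_add_cancel_of_le hb, mul_one, tsub_add_cancel_of_le ha]
    _ = (1 - a) + a * (1 - b) + a * b := by ring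
    _ ≤ (1 - a) + (1 - b) + a * b := by gcongr; exact mul_le_of_le_one_left zero_le ha

theorem one_sub_prod_le_sum {ι : Type*} (s : Finset ι) (f : ι → R) :
    1 - ∏ i ∈ s, f i ≤ ∑ i ∈ s, (1 - f i) :=
  s.apply_prod_le_sum_apply (1 - ·) (by simp) one_sub_mul_le_add

theorem one_sub_pow_le_mul (a : R) (n : ℕ) : 1 - a ^ n ≤ n * (1 - a) := by
  simpa using one_sub_prod_le_sum (Finset.range n) fun _ ↦ a

end

theorem Finsupp.one_sub_prod_pow_le_tsum {X : Type*} (f : X →₀ ℕ) (z : X → ℝ≥0∞) :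
    1 - ∏ y ∈ f.support, z y ^ f y ≤ ∑' y, (f y : ℝ≥0∞) * (1 - z y) := by
  calc 1 - ∏ y ∈ f.support, z y ^ f y ≤ ∑ y ∈ f.support, (1 - z y ^ f y) :=
        one_sub_prod_le_sum _ _
    _ ≤ ∑ y ∈ f.support, (f y : ℝ≥0∞) * (1 - z y) :=
        Finset.sum_le_sum fun y _ ↦ one_sub_pow_le_mul (z y) (f y)
    _ = ∑' y, (f y : ℝ≥0∞) * (1 - z y) :=
        (tsum_eq_sum fun y hy ↦ by simp [Finsupp.notMem_support_iff.mp hy]).symm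

theorem ENNReal.one_sub_tsum_mul_le {ι : Type*} {μ : ι → ℝ≥0∞} (hμ : ∑' i, μ i = 1)
    (g : ι → ℝ≥0∞) : 1 - ∑' i, μ i * g i ≤ ∑' i, μ i * (1 - g i) := by
  rw [tsub_le_iff_right, ← ENNReal.tsum_add]
  calc 1 = ∑' i, μ i * 1 := by simp [hμ]
    _ ≤ ∑' i, (μ i * (1 - g i) + μ i * g i) := by
        gcongr with i; rw [← mul_add]; gcongr; exact le_tsub_add

theorem generating_function_subsolution_gives_superharmonic_general {X : Type*}
    (μ : X → (X →₀ ℕ) → ℝ≥0∞)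
    (hprob : ∀ x, ∑' f : X →₀ ℕ, μ x f = 1)
    (m : X → X → ℝ≥0∞)
    (hm : ∀ x y, m x y = ∑' f : X →₀ ℕ, μ x f * (f y : ℝ≥0∞))
    (z : X → ℝ≥0∞)
    (hsub : ∀ x, (∑' f : X →₀ ℕ, μ x f * ∏ y ∈ f.support, z y ^ f y) ≤ z x) :
    ∀ x, 1 - z x ≤ ∑' y, m x y * (1 - z y) := by
  intro x
  calc 1 - z x ≤ 1 - ∑' f : X →₀ ℕ, μ x f * ∏ y ∈ f.support, z y ^ f y :=
        tsub_le_tsub_left (hsub x) 1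
    _ ≤ ∑' f : X →₀ ℕ, μ x f * (1 - ∏ y ∈ f.support, z y ^ f y) :=
        ENNReal.one_sub_tsum_mul_le (hprob x) _
    _ ≤ ∑' f : X →₀ ℕ, μ x f * ∑' y, (f y : ℝ≥0∞) * (1 - z y) := by
        gcongr with f; exact f.one_sub_prod_pow_le_tsum z
    _ = ∑' y, m x y * (1 - z y) := by
        simp_rw [hm, ← ENNReal.tsum_mul_left, ← ENNReal.tsum_mul_right, mul_assoc]
        exact ENNReal.tsum_comm

/-- If `z ∈ [0,1]^X` satisfies `G(z|x) ≤ z(x)` for all `x`, where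
`G(z|x) = ∑_f μ_x(f) ∏_y z(y)^{f(y)}` is the generating function of a branching random
walk with offspring distributions `μ_x` (probability measures on finitely supported
functions `X → ℕ`) having first moments `m_{xy}` with finite row sums, then
`v := 1 - z` satisfies `Mv ≥ v`, i.e. `∑_y m_{xy} v(y) ≥ v(x)` for every `x`. -/
theorem generating_function_subsolution_gives_superharmonic {X : Type*} [Countable X]
    (μ : X → (X →₀ ℕ) → ℝ≥0∞)
    (hprob : ∀ x, ∑' f : X →₀ ℕ, μ x f = 1)
    (m : X → X → ℝ≥0∞)
    (hm : ∀ x y, m x y = ∑' f : X →₀ ℕ, μ x f * (f y : ℝ≥0∞))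
    (hrow : ∀ x, ∑' y, m x y ≠ ∞)
    (z : X → ℝ≥0∞) (hz : ∀ x, z x ≤ 1)
    (hsub : ∀ x, (∑' f : X →₀ ℕ, μ x f * ∏ y ∈ f.support, z y ^ f y) ≤ z x) :
    ∀ x, 1 - z x ≤ ∑' y, m x y * (1 - z y) :=
  generating_function_subsolution_gives_superharmonic_general μ hprob m hm z hsub
end

section
/- Let $G:[0,1]^X\to[0,1]^X$ ($X$ countable) be monotone and pointwise-continuous with smallest fixed point $\bar q$, and suppose additionally a second family $G_\lambda$ indexed by $\lambda>0$ satisfies: $\sup_x|G_\lambda(z|x)-G_{\lambda'}(z|x)|\le C|\lambda-\lambda'|$ for all $z\in[0,1]^X$ and some constant $C$, and $\lambda\ge\lambda'$ implies $G_\lambda(z)\le G_{\lambda'}(z)$ pointwise for all $z$. Let $\bar q_\lambda$ denote the smallest solution of $G_\lambda(z)\le z$ in $[0,1]^X$. Then $\lambda\mapsto\bar q_\lambda$ is nonincreasing and right-continuous: $\bar q_\lambda \uparrow \bar q_{\lambda'}$ pointwise as $\lambda\downarrow\lambda'$. -/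
open Filter Topology

/-- `z` belongs to the "cube" `[0,1]^X`. -/
def memCube {X : Type*} (z : X → ℝ) : Prop := ∀ x, 0 ≤ z x ∧ z x ≤ 1

/-- Let `{G_λ}_{λ>0}` be a family of monotone, pointwise-continuous maps of `[0,1]^X`
that is nonincreasing and uniformly Lipschitz in `λ`, and let `q̄_λ` be the smallest
solution of `G_λ(z) ≤ z` in `[0,1]^X`.  Then `λ ↦ q̄_λ` is nonincreasing and
right-continuous: `q̄_λ ↑ q̄_{λ'}` pointwise as `λ ↓ λ'`. -/
theorem extinction_probability_monotone_right_continuous {X : Type*} [Countable X]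
    (G : ℝ → (X → ℝ) → (X → ℝ))
    (hmaps : ∀ lam, 0 < lam → ∀ z, memCube z → memCube (G lam z))
    (hmono : ∀ lam, 0 < lam → ∀ z w, memCube z → memCube w →
      (∀ x, z x ≤ w x) → ∀ x, G lam z x ≤ G lam w x)
    (hcont : ∀ lam, 0 < lam → ∀ (zs : ℕ → X → ℝ) (zl : X → ℝ),
      (∀ n, memCube (zs n)) → memCube zl →
      (∀ x, Tendsto (fun n => zs n x) atTop (𝓝 (zl x))) →
      ∀ x, Tendsto (fun n => G lam (zs n) x) atTop (𝓝 (G lam zl x)))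
    (C : ℝ)
    (hlip : ∀ lam lam', 0 < lam → 0 < lam' → ∀ z, memCube z →
      ∀ x, |G lam z x - G lam' z x| ≤ C * |lam - lam'|)
    (hGmono : ∀ lam lam', 0 < lam' → lam' ≤ lam → ∀ z, memCube z →
      ∀ x, G lam z x ≤ G lam' z x)
    (qbar : ℝ → X → ℝ)
    (hqbar : ∀ lam, 0 < lam → memCube (qbar lam) ∧
      (∀ x, G lam (qbar lam) x ≤ qbar lam x) ∧
      (∀ z, memCube z → (∀ x, G lam z x ≤ z x) → ∀ x, qbar lam x ≤ z x)) :
    (∀ lam lam', 0 < lam' → lam' ≤ lam → ∀ x, qbar lam x ≤ qbar lam' x) ∧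
    (∀ lam', 0 < lam' → ∀ x,
      Tendsto (fun lam => qbar lam x) (𝓝[>] lam') (𝓝 (qbar lam' x))) := by

  have mono : ∀ lam lam', 0 < lam' → lam' ≤ lam → ∀ x, qbar lam x ≤ qbar lam' x := by
    intro lam lam' hl' hle x
    have hl : 0 < lam := lt_of_lt_of_le hl' hle
    obtain ⟨hc', hfix', hmin'⟩ := hqbar lam' hl'
    obtain ⟨hc, hfix, hmin⟩ := hqbar lam hl
    exact hmin (qbar lam') hc'
      (fun y => (hGmono lam lam' hl' hle _ hc' y).trans (hfix' y)) x
  refine ⟨mono, ?_⟩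
  intro l hl x
  set lamn : ℕ → ℝ := fun n => l + 1 / (n + 1) with hlamn
  have hgt : ∀ n, l < lamn n := by
    intro n
    have : (0:ℝ) < 1 / (n + 1) := by positivity
    simpa [hlamn] using this
  have hpos : ∀ n, 0 < lamn n := fun n => hl.trans (hgt n)
  have hanti : ∀ m n, m ≤ n → lamn n ≤ lamn m := by
    intro m n hmn
    have hc : ((m:ℝ) + 1) ≤ (n:ℝ) + 1 := by exact_mod_cast Nat.succ_le_succ hmn
    have : (1:ℝ) / (n + 1) ≤ 1 / (m + 1) := one_div_le_one_div_of_le (by positivity) hc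
    simpa [hlamn] using this
  have hqc : ∀ n, memCube (qbar (lamn n)) := fun n => (hqbar _ (hpos n)).1
  have hbdd : ∀ y, BddAbove (Set.range fun n => qbar (lamn n) y) := by
    intro y
    exact ⟨1, by rintro _ ⟨n, rfl⟩; exact (hqc n y).2⟩
  have hseqmono : ∀ y, Monotone fun n => qbar (lamn n) y := by
    intro y m n hmn
    exact mono (lamn m) (lamn n) (hpos n) (hanti m n hmn) y
  set L : X → ℝ := fun y => ⨆ n, qbar (lamn n) y with hLdef
  have htend : ∀ y, Tendsto (fun n => qbar (lamn n) y) atTop (𝓝 (L y)) :=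
    fun y => tendsto_atTop_ciSup (hseqmono y) (hbdd y)
  have hLcube : memCube L := by
    intro y
    constructor
    · exact le_trans (hqc 0 y).1 (le_ciSup (hbdd y) 0)
    · exact ciSup_le fun n => (hqc n y).2
  have h1n : Tendsto (fun n : ℕ => (1:ℝ) / (n + 1)) atTop (𝓝 0) :=
    tendsto_one_div_add_atTop_nhds_zero_nat
  have hGL : ∀ y, G l L y ≤ L y := by
    intro y
    have hLHS : Tendsto (fun n => G l (qbar (lamn n)) y) atTop (𝓝 (G l L y)) :=
      hcont l hl _ L hqc hLcube htend y
    have hRHS : Tendsto (fun n => qbar (lamn n) y + C * (1 / (n + 1))) atTop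
        (𝓝 (L y)) := by
      have hC : Tendsto (fun n : ℕ => C * (1 / (n + 1))) atTop (𝓝 (C * 0)) :=
        (tendsto_const_nhds (x := C)).mul h1n
      have := (htend y).add hC
      simpa using this
    refine le_of_tendsto_of_tendsto' hLHS hRHS fun n => ?_
    have hd := hlip l (lamn n) hl (hpos n) _ (hqc n) y
    have habs : |l - lamn n| = 1 / (n + 1) := by
      rw [abs_sub_comm]
      rw [abs_of_nonneg (by linarith [hgt n])]
      simp [hlamn]
    rw [habs] at hd
    have h1 := abs_le.1 hd
    have h2 := (hqbar _ (hpos n)).2.1 y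
    linarith [h1.2]
  have hLle : ∀ y, L y ≤ qbar l y :=
    fun y => ciSup_le fun n => mono (lamn n) l hl (hgt n).le y
  have hlge : ∀ y, qbar l y ≤ L y :=
    (hqbar l hl).2.2 L hLcube hGL
  have hLeq : ∀ y, L y = qbar l y := fun y => le_antisymm (hLle y) (hlge y)
  rw [tendsto_order]
  constructor
  · intro a ha
    rw [← hLeq x] at ha
    obtain ⟨n, hn⟩ := exists_lt_of_lt_ciSup ha
    filter_upwards [Ioo_mem_nhdsGT_of_mem (Set.left_mem_Ico.2 (hgt n))] with lam hlam
    exact lt_of_lt_of_le hn (mono (lamn n) lam (hl.trans hlam.1) hlam.2.le x)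
  · intro b hb
    filter_upwards [self_mem_nhdsWithin] with lam hlam
    exact lt_of_le_of_lt (mono lam l hl (le_of_lt hlam) x) hb
end
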